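/- arXiv:2108.04598 — 7 statements merged into one kernel-verified Lean document; each statement's English description precedes it below -/
import Mathlib

section
/- With X = ℓ^p_α and Y = ℝ^ℕ as above, the Borel σ-algebra of X equals the trace σ-algebra {B ∩ X : B Borel in Y}. -/
open MeasureTheory

/-- The weighted sequence space `ℓ^p_α` as a subset of `ℝ^ℕ`. -/
def weightedLp (p : ℝ) (α : ℕ → ℝ) : Set (ℕ → ℝ) :=
  {x | Summable fun k => |x k / α k| ^ p}

/-- The `ℓ^p_α`-distance. -/
noncomputable def weightedLpDist (p : ℝ) (α : ℕ → ℝ) (x y : ℕ → ℝ) : ℝ :=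
  (∑' k, |(x k - y k) / α k| ^ p) ^ (1 / p)

/-- The norm topology on `ℓ^p_α`, generated by the open balls. -/
noncomputable def weightedLpTopology (p : ℝ) (α : ℕ → ℝ) :
    TopologicalSpace (weightedLp p α) :=
  TopologicalSpace.generateFrom
    {U | ∃ (z : weightedLp p α) (r : ℝ), 0 < r ∧
      U = {x : weightedLp p α | weightedLpDist p α (x : ℕ → ℝ) (z : ℕ → ℝ) < r}}

/-! The rescaling `x ↦ (x k / α k)_k` is an isometry of `ℓ^p_α` onto `ℓ^p`, which is complete and
separable, so `ℓ^p_α` is Polish. The inclusion `ℓ^p_α → ℝ^ℕ` is continuous and injective, hence by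
the Lusin–Souslin theorem it maps Borel sets to Borel sets: it is a measurable embedding, and the
Borel σ-algebra of `ℓ^p_α` is the pullback of that of `ℝ^ℕ`. -/

open scoped ENNReal

theorem TopologicalSpace.generateFrom_preimage_balls_eq_induced {X M : Type*}
    [PseudoMetricSpace M] {f : X → M} (hf : Function.Surjective f) :
    TopologicalSpace.generateFrom {U | ∃ (z : X) (r : ℝ), 0 < r ∧ U = {x | dist (f x) (f z) < r}}
      = TopologicalSpace.induced f inferInstance := by
  have hballs : TopologicalSpace.IsTopologicalBasis
      {s : Set M | ∃ c r, 0 < r ∧ s = Metric.ball c r} := by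
    refine TopologicalSpace.isTopologicalBasis_of_isOpen_of_nhds ?_ fun x u hx hu => ?_
    · rintro s ⟨c, r, -, rfl⟩
      exact Metric.isOpen_ball
    · obtain ⟨r, hr, hsub⟩ := Metric.isOpen_iff.1 hu x hx
      exact ⟨Metric.ball x r, ⟨x, r, hr, rfl⟩, Metric.mem_ball_self hr, hsub⟩
  rw [hballs.eq_generateFrom, induced_generateFrom_eq]
  congr 1
  ext U
  constructor
  · rintro ⟨z, r, hr, rfl⟩
    exact ⟨Metric.ball (f z) r, ⟨f z, r, hr, rfl⟩, rfl⟩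
  · rintro ⟨-, ⟨c, r, hr, rfl⟩, rfl⟩
    obtain ⟨z, rfl⟩ := hf c
    exact ⟨z, r, hr, rfl⟩

theorem lp.separableSpace_of_ne_top {ι : Type*} [Countable ι] {p : ℝ≥0∞} [Fact (1 ≤ p)]
    (hp : p ≠ ∞) :
    TopologicalSpace.SeparableSpace (lp (fun _ : ι => ℝ) p) := by
  classical
  set S : Submodule ℝ (lp (fun _ : ι => ℝ) p) :=
    Submodule.span ℝ (Set.range fun i => lp.single p i 1)
  have hS : TopologicalSpace.IsSeparable (S : Set (lp (fun _ : ι => ℝ) p)) :=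
    (Set.countable_range _).isSeparable.span
  have hdense : ∀ f, f ∈ closure (S : Set (lp (fun _ : ι => ℝ) p)) := fun f =>
    mem_closure_of_tendsto (lp.hasSum_single hp f) <| Filter.Eventually.of_forall fun s =>
      S.sum_mem fun i _ => by
        simpa [← lp.single_smul] using S.smul_mem (f i) (Submodule.subset_span ⟨i, rfl⟩)
  rw [← TopologicalSpace.isSeparable_univ_iff]
  exact hS.closure.mono fun f _ => hdense f

namespace weightedLp

variable {p : ℝ} {α : ℕ → ℝ}

theorem mem_iff_memℓp (hp : 0 < p) {x : ℕ → ℝ} :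
    x ∈ weightedLp p α ↔ Memℓp (fun k => x k / α k) (ENNReal.ofReal p) := by
  rw [memℓp_gen_iff (by rwa [ENNReal.toReal_ofReal hp.le]), ENNReal.toReal_ofReal hp.le]
  simp only [weightedLp, Set.mem_ofPred_eq, Real.norm_eq_abs]

noncomputable def equivLp (hp : 0 < p) (hα : ∀ k, α k ≠ 0) :
    weightedLp p α ≃ lp (fun _ : ℕ => ℝ) (ENNReal.ofReal p) where
  toFun x := ⟨fun k => x.1 k / α k, (mem_iff_memℓp hp).1 x.2⟩
  invFun f := ⟨fun k => α k * f k, (mem_iff_memℓp hp).2 <| by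
    simpa [mul_div_cancel_left₀ _ (hα _)] using lp.memℓp f⟩
  left_inv x := by ext k; exact mul_div_cancel₀ _ (hα k)
  right_inv f := by ext k; exact mul_div_cancel_left₀ _ (hα k)

theorem equivLp_apply (hp : 0 < p) (hα : ∀ k, α k ≠ 0) (x : weightedLp p α) (k : ℕ) :
    equivLp hp hα x k = x.1 k / α k := rfl

theorem dist_equivLp [Fact (1 ≤ ENNReal.ofReal p)] (hp : 0 < p) (hα : ∀ k, α k ≠ 0)
    (x y : weightedLp p α) :
    dist (equivLp hp hα x) (equivLp hp hα y) = weightedLpDist p α x y := by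
  rw [dist_eq_norm, lp.norm_eq_tsum_rpow (by rwa [ENNReal.toReal_ofReal hp.le]),
    ENNReal.toReal_ofReal hp.le, weightedLpDist]
  simp only [lp.coeFn_sub, Pi.sub_apply, equivLp_apply, Real.norm_eq_abs, sub_div]

theorem topology_eq_induced_equivLp [Fact (1 ≤ ENNReal.ofReal p)] (hp : 0 < p)
    (hα : ∀ k, α k ≠ 0) :
    weightedLpTopology p α = TopologicalSpace.induced (equivLp hp hα) inferInstance := by
  rw [← TopologicalSpace.generateFrom_preimage_balls_eq_induced (equivLp hp hα).surjective]
  simp only [dist_equivLp, weightedLpTopology]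

theorem polishSpace (hp : 1 ≤ p) (hα : ∀ k, α k ≠ 0) :
    @PolishSpace (weightedLp p α) (weightedLpTopology p α) := by
  have : Fact (1 ≤ ENNReal.ofReal p) := ⟨ENNReal.one_le_ofReal.2 hp⟩
  have : TopologicalSpace.SeparableSpace (lp (fun _ : ℕ => ℝ) (ENNReal.ofReal p)) :=
    lp.separableSpace_of_ne_top ENNReal.ofReal_ne_top
  have : SecondCountableTopology (lp (fun _ : ℕ => ℝ) (ENNReal.ofReal p)) :=
    UniformSpace.secondCountable_of_separable _
  rw [topology_eq_induced_equivLp (by linarith) hα]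
  exact (equivLp _ hα).polishSpace_induced

theorem continuous_val (hp : 1 ≤ p) (hα : ∀ k, α k ≠ 0) :
    @Continuous _ _ (weightedLpTopology p α) _ (Subtype.val : weightedLp p α → ℕ → ℝ) := by
  have : Fact (1 ≤ ENNReal.ofReal p) := ⟨ENNReal.one_le_ofReal.2 hp⟩
  have hval : (Subtype.val : weightedLp p α → ℕ → ℝ)
      = (fun (g : lp (fun _ : ℕ => ℝ) (ENNReal.ofReal p)) k => α k * g k) ∘
          equivLp (by linarith) hα := by
    ext x k
    exact (mul_div_cancel₀ _ (hα k)).symm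
  have hscale : Continuous fun (g : lp (fun _ : ℕ => ℝ) (ENNReal.ofReal p)) k => α k * g k :=
    continuous_pi fun k => continuous_const.mul (lp.lipschitzWith_one_eval _ k).continuous
  rw [topology_eq_induced_equivLp (by linarith) hα, hval]
  -- the subtype also carries the subspace topology as an instance, so the topology is explicit
  exact @Continuous.comp _ _ _ (_) _ _ _ _ hscale continuous_induced_dom

end weightedLp

/-- The Borel σ-algebra of `ℓ^p_α` equals the trace of the Borel σ-algebra of
`ℝ^ℕ` (with the product topology) on `ℓ^p_α`. -/
theorem stmt1 (p : ℝ) (hp : 1 ≤ p) (α : ℕ → ℝ) (hα : ∀ k, 0 < α k) :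
    @borel (weightedLp p α) (weightedLpTopology p α)
      = MeasurableSpace.comap (Subtype.val : weightedLp p α → (ℕ → ℝ))
          (borel (ℕ → ℝ)) := by
  have hα' : ∀ k, α k ≠ 0 := fun k => (hα k).ne'
  let := weightedLpTopology p α
  let : MeasurableSpace (weightedLp p α) := borel _
  have : BorelSpace (weightedLp p α) := ⟨rfl⟩
  have := weightedLp.polishSpace hp hα'
  rw [← BorelSpace.measurable_eq (α := ℕ → ℝ)]
  exact ((weightedLp.continuous_val hp hα').measurableEmbedding Subtype.val_injective).comap_eq.symm
end

section
/- Let (u_k) be i.i.d. real random variables with common distribution given by a probability density ρ on ℝ, let γ_k, α_k > 0, and suppose that Σ_k |γ_k u_k / α_k|^p < ∞ almost surely for some 1 ≤ p < ∞. Then γ_k/α_k → 0 as k → ∞, and Σ_k (γ_k/α_k)^p < ∞. -/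
/-!
Put `X k = min (|c k * u k| ^ p) 1` with `c k = γ k / α k`. The `X k` are independent, take
values in `[0, 1]` and are almost surely summable. Since `exp (-t) ≤ 1 - κ t` on `[0, 1]` with
`κ = 1 - exp (-1)`, independence gives
`E exp (-∑_{k<n} X k) = ∏_{k<n} E exp (-X k) ≤ exp (-κ ∑_{k<n} E X k)`,
while the left side stays above `E exp (-∑' k, X k) > 0`; hence `∑ E X k < ∞`.
As the law of `u k` has no atom at `0`, `E X k ≥ min (c k ^ p) 1 * E min (|u 0| ^ p) 1` with a
positive second factor, so `∑ min (c k ^ p) 1 < ∞`, which forces `c k → 0` and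
`∑ c k ^ p < ∞`.
-/

open MeasureTheory Filter ProbabilityTheory Finset Real

lemma exp_neg_le_one_sub_mul {t : ℝ} (h0 : 0 ≤ t) (h1 : t ≤ 1) :
    exp (-t) ≤ 1 - (1 - exp (-1)) * t := by
  have := convexOn_exp.2 (Set.mem_univ 0) (Set.mem_univ (-1)) (by linarith : 0 ≤ 1 - t) h0
    (by ring)
  simp only [smul_eq_mul, mul_zero, mul_neg, mul_one, zero_add, exp_zero] at this
  linarith

lemma min_mul_min_one_le {a b : ℝ} (ha : 0 ≤ a) (hb : 0 ≤ b) :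
    min a 1 * min b 1 ≤ min (a * b) 1 :=
  le_min (mul_le_mul (min_le_left _ _) (min_le_left _ _) (le_min hb zero_le_one) ha)
    (mul_le_one₀ (min_le_right _ _) (le_min hb zero_le_one) (min_le_right _ _))

lemma summable_of_summable_min_one {ι : Type*} {f : ι → ℝ}
    (h : Summable fun i => min (f i) 1) : Summable f := by
  refine h.congr_cofinite ?_
  filter_upwards [h.tendsto_cofinite_zero.eventually (gt_mem_nhds one_pos)] with i hi
  exact min_eq_left (min_lt_iff.1 hi |>.resolve_right (lt_irrefl 1)).le

lemma tendsto_zero_of_tendsto_rpow_zero {ι : Type*} {l : Filter ι} {f : ι → ℝ} {p : ℝ}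
    (hp : 0 < p) (hf : ∀ i, 0 ≤ f i) (h : Tendsto (fun i => f i ^ p) l (nhds 0)) :
    Tendsto f l (nhds 0) := by
  have hcont := (continuousAt_rpow_const 0 p⁻¹ (Or.inr (inv_nonneg.2 hp.le))).tendsto.comp h
  rw [zero_rpow (inv_ne_zero hp.ne')] at hcont
  exact hcont.congr fun i => rpow_rpow_inv (hf i) hp.ne'

lemma integrable_of_nonneg_of_le_one {α : Type*} [MeasurableSpace α] {μ : Measure α}
    [IsFiniteMeasure μ] {f : α → ℝ} (hf : AEStronglyMeasurable f μ) (h0 : ∀ x, 0 ≤ f x)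
    (h1 : ∀ x, f x ≤ 1) : Integrable f μ :=
  Integrable.of_bound hf 1 (ae_of_all _ fun x => by rw [norm_of_nonneg (h0 x)]; exact h1 x)

section Independence

variable {Ω : Type*} [MeasurableSpace Ω] {P : Measure Ω}

lemma ProbabilityTheory.iIndepFun.integral_finset_prod {ι : Type*} {Y : ι → Ω → ℝ}
    (hY : iIndepFun Y P) (mY : ∀ i, AEStronglyMeasurable (Y i) P) (s : Finset ι) :
    ∫ ω, ∏ i ∈ s, Y i ω ∂P = ∏ i ∈ s, ∫ ω, Y i ω ∂P := by
  have hYs : iIndepFun (fun i : s => Y i) P := hY.precomp Subtype.val_injective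
  convert hYs.integral_fun_prod_eq_prod_integral (fun i => mY i) using 1
  · simp_rw [← prod_coe_sort s]
  · exact (prod_coe_sort s _).symm

variable [IsProbabilityMeasure P]

lemma integral_exp_neg_le {X : Ω → ℝ} (hX : Integrable X P) (h0 : ∀ ω, 0 ≤ X ω)
    (h1 : ∀ ω, X ω ≤ 1) :
    ∫ ω, exp (-X ω) ∂P ≤ exp (-((1 - exp (-1)) * ∫ ω, X ω ∂P)) :=
  calc ∫ ω, exp (-X ω) ∂P ≤ ∫ ω, 1 - (1 - exp (-1)) * X ω ∂P :=
        integral_mono_of_nonneg (ae_of_all _ fun ω => (exp_pos _).le)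
          ((integrable_const 1).sub (hX.const_mul _))
          (ae_of_all _ fun ω => exp_neg_le_one_sub_mul (h0 ω) (h1 ω))
    _ = 1 - (1 - exp (-1)) * ∫ ω, X ω ∂P := by
        rw [integral_sub (integrable_const 1) (hX.const_mul _), integral_const_mul]
        simp
    _ ≤ exp (-((1 - exp (-1)) * ∫ ω, X ω ∂P)) := by
        linarith [add_one_le_exp (-((1 - exp (-1)) * ∫ ω, X ω ∂P))]

lemma integral_prod_exp_neg_le {ι : Type*} {X : ι → Ω → ℝ} (hind : iIndepFun X P)
    (hX : ∀ i, Measurable (X i)) (h0 : ∀ i ω, 0 ≤ X i ω) (h1 : ∀ i ω, X i ω ≤ 1)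
    (s : Finset ι) :
    ∫ ω, ∏ i ∈ s, exp (-X i ω) ∂P ≤ exp (-((1 - exp (-1)) * ∑ i ∈ s, ∫ ω, X i ω ∂P)) :=
  calc ∫ ω, ∏ i ∈ s, exp (-X i ω) ∂P = ∏ i ∈ s, ∫ ω, exp (-X i ω) ∂P :=
        (hind.comp (fun _ t => exp (-t)) fun _ => measurable_neg.exp).integral_finset_prod
          (fun i => (hX i).neg.exp.aestronglyMeasurable) s
    _ ≤ ∏ i ∈ s, exp (-((1 - exp (-1)) * ∫ ω, X i ω ∂P)) :=
        prod_le_prod (fun i _ => integral_nonneg fun ω => (exp_pos _).le) fun i _ =>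
          integral_exp_neg_le (integrable_of_nonneg_of_le_one (hX i).aestronglyMeasurable
            (h0 i) (h1 i)) (h0 i) (h1 i)
    _ = exp (-((1 - exp (-1)) * ∑ i ∈ s, ∫ ω, X i ω ∂P)) := by
        rw [← exp_sum, mul_sum, sum_neg_distrib]

/-- The converse half of Kolmogorov's three-series theorem for `[0, 1]`-valued variables. -/
theorem summable_integral_of_iIndepFun_of_ae_summable {X : ℕ → Ω → ℝ}
    (hind : iIndepFun X P) (hX : ∀ k, Measurable (X k)) (h0 : ∀ k ω, 0 ≤ X k ω)
    (h1 : ∀ k ω, X k ω ≤ 1) (hsum : ∀ᵐ ω ∂P, Summable fun k => X k ω) :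
    Summable fun k => ∫ ω, X k ω ∂P := by
  set κ := 1 - exp (-1)
  have hκ : 0 < κ := by linarith [Real.exp_lt_one_iff.2 (by norm_num : (-1 : ℝ) < 0)]
  have hSmeas : AEStronglyMeasurable (fun ω => ∑' k, X k ω) P :=
    aestronglyMeasurable_of_tendsto_ae atTop
      (fun n => (Finset.measurable_sum _ fun k _ => hX k).aestronglyMeasurable)
      (hsum.mono fun ω hω => hω.hasSum.tendsto_sum_nat)
  have hSpos : 0 < ∫ ω, exp (-∑' k, X k ω) ∂P :=
    integral_exp_pos <| integrable_of_nonneg_of_le_one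
      (continuous_exp.comp_aestronglyMeasurable hSmeas.neg) (fun ω => (exp_pos _).le)
      fun ω => exp_le_one_iff.2 (neg_nonpos.2 (tsum_nonneg (h0 · ω)))
  have hpartial (n : ℕ) :
      ∫ ω, exp (-∑' k, X k ω) ∂P ≤ ∫ ω, ∏ k ∈ range n, exp (-X k ω) ∂P := by
    refine integral_mono_of_nonneg (ae_of_all _ fun ω => (exp_pos _).le)
      (integrable_of_nonneg_of_le_one
        (Finset.measurable_prod _ fun k _ => (hX k).neg.exp).aestronglyMeasurable
        (fun ω => prod_nonneg fun k _ => (exp_pos _).le)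
        fun ω => prod_le_one (fun k _ => (exp_pos _).le) fun k _ => by simp [h0]) ?_
    filter_upwards [hsum] with ω hω
    rw [← exp_sum, sum_neg_distrib]
    exact exp_le_exp.2 (neg_le_neg (hω.sum_le_tsum _ fun k _ => h0 k ω))
  refine summable_of_sum_range_le (c := -log (∫ ω, exp (-∑' k, X k ω) ∂P) / κ)
    (fun k => integral_nonneg (h0 k)) fun n => ?_
  rw [le_div_iff₀ hκ, mul_comm, le_neg, ← log_exp (-_)]
  exact log_le_log hSpos
    ((hpartial n).trans (integral_prod_exp_neg_le hind hX h0 h1 (range n)))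

end Independence

lemma integral_min_rpow_abs_one_pos {μ : Measure ℝ} [IsFiniteMeasure μ] (hμ : μ {0}ᶜ ≠ 0)
    (p : ℝ) : 0 < ∫ y, min (|y| ^ p) 1 ∂μ := by
  have hnonneg : ∀ y : ℝ, 0 ≤ min (|y| ^ p) 1 := fun y => le_min (by positivity) zero_le_one
  refine (integral_pos_iff_support_of_nonneg hnonneg (integrable_of_nonneg_of_le_one
    (Measurable.aestronglyMeasurable (by fun_prop)) hnonneg fun y => min_le_right _ _)).2 ?_
  refine (pos_iff_ne_zero.2 hμ).trans_le (measure_mono fun y (hy : y ≠ 0) => ?_)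
  exact (lt_min (rpow_pos_of_pos (abs_pos.2 hy) p) one_pos).ne'

lemma mul_integral_min_rpow_abs_one_le {μ : Measure ℝ} [IsFiniteMeasure μ] {c : ℝ}
    (hc : 0 ≤ c) (p : ℝ) :
    min (c ^ p) 1 * ∫ y, min (|y| ^ p) 1 ∂μ ≤ ∫ y, min (|c * y| ^ p) 1 ∂μ := by
  rw [← integral_const_mul]
  refine integral_mono_of_nonneg (ae_of_all _ fun y => by positivity)
    (integrable_of_nonneg_of_le_one (Measurable.aestronglyMeasurable (by fun_prop))
      (fun y => le_min (by positivity) zero_le_one) fun y => min_le_right _ _)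
    (ae_of_all _ fun y => ?_)
  dsimp only
  rw [abs_mul, abs_of_nonneg hc, mul_rpow hc (abs_nonneg y)]
  exact min_mul_min_one_le (by positivity) (by positivity)

theorem stmt2_general {Ω : Type*} [MeasurableSpace Ω] (P : Measure Ω) [IsProbabilityMeasure P]
    (u : ℕ → Ω → ℝ) (hmeas : ∀ k, Measurable (u k))
    (hindep : ProbabilityTheory.iIndepFun u P)
    (ρ : ℝ → ℝ)
    (hlaw : ∀ k, P.map (u k) = volume.withDensity (fun y => ENNReal.ofReal (ρ y)))
    (γ α : ℕ → ℝ) (hγ : ∀ k, 0 < γ k) (hα : ∀ k, 0 < α k)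
    (p : ℝ) (hp : 1 ≤ p)
    (hsum : ∀ᵐ ω ∂P, Summable fun k => |γ k * u k ω / α k| ^ p) :
    Tendsto (fun k => γ k / α k) atTop (nhds 0) ∧
      Summable fun k => (γ k / α k) ^ p := by
  set c : ℕ → ℝ := fun k => γ k / α k
  have hc : ∀ k, 0 ≤ c k := fun k => (div_pos (hγ k) (hα k)).le
  set μ : Measure ℝ := volume.withDensity fun y => ENNReal.ofReal (ρ y)
  have : IsProbabilityMeasure μ :=
    hlaw 0 ▸ Measure.isProbabilityMeasure_map (hmeas 0).aemeasurable
  have hμ : μ {0}ᶜ ≠ 0 := by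
    rw [measure_compl (measurableSet_singleton 0) (measure_ne_top μ _),
      withDensity_absolutelyContinuous _ _ Real.volume_singleton, measure_univ]
    norm_num
  have hfmeas : ∀ k, Measurable fun y : ℝ => min (|c k * y| ^ p) 1 := fun k => by fun_prop
  have hE : Summable fun k => ∫ y, min (|c k * y| ^ p) 1 ∂μ := by
    have hX := summable_integral_of_iIndepFun_of_ae_summable
      (hindep.comp (fun k y => min (|c k * y| ^ p) 1) hfmeas)
      (fun k => (hfmeas k).comp (hmeas k))
      (fun k ω => le_min (by positivity) zero_le_one) (fun k ω => min_le_right _ _)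
      (hsum.mono fun ω hω => hω.of_nonneg_of_le (fun k => le_min (by positivity) zero_le_one)
        fun k => by simp only [Function.comp_apply, mul_div_right_comm]; exact min_le_left _ _)
    refine hX.congr fun k => ?_
    rw [← hlaw k, integral_map (hmeas k).aemeasurable (hfmeas k).aestronglyMeasurable]
    rfl
  have hmin : Summable fun k => min (c k ^ p) 1 :=
    (hE.div_const (∫ y, min (|y| ^ p) 1 ∂μ)).of_nonneg_of_le
      (fun k => le_min (rpow_nonneg (hc k) p) zero_le_one) fun k =>
        (le_div_iff₀ (integral_min_rpow_abs_one_pos hμ p)).2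
          (mul_integral_min_rpow_abs_one_le (hc k) p)
  have hsum_c := summable_of_summable_min_one hmin
  exact ⟨tendsto_zero_of_tendsto_rpow_zero (by linarith) hc hsum_c.tendsto_atTop_zero, hsum_c⟩

/-- If `(u k)` are i.i.d. real random variables whose common law has an everywhere
positive density `ρ`, and `∑ k, |γ k * u k / α k| ^ p < ∞` almost surely for some
`1 ≤ p < ∞`, then `γ k / α k → 0` and `∑ k (γ k / α k) ^ p < ∞`. -/
theorem stmt2 {Ω : Type*} [MeasurableSpace Ω] (P : Measure Ω) [IsProbabilityMeasure P]
    (u : ℕ → Ω → ℝ) (hmeas : ∀ k, Measurable (u k))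
    (hindep : ProbabilityTheory.iIndepFun u P)
    (ρ : ℝ → ℝ) (hρmeas : Measurable ρ) (hρpos : ∀ y, 0 < ρ y)
    (hlaw : ∀ k, P.map (u k) = volume.withDensity (fun y => ENNReal.ofReal (ρ y)))
    (γ α : ℕ → ℝ) (hγ : ∀ k, 0 < γ k) (hα : ∀ k, 0 < α k)
    (p : ℝ) (hp : 1 ≤ p)
    (hsum : ∀ᵐ ω ∂P, Summable fun k => |γ k * u k ω / α k| ^ p) :
    Tendsto (fun k => γ k / α k) atTop (nhds 0) ∧
      Summable fun k => (γ k / α k) ^ p :=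
  stmt2_general P u hmeas hindep ρ hlaw γ α hγ hα p hp hsum
end

section
/- Under the assumptions of the previous statement, suppose additionally there exist C > 0, x_0 > 0 and τ > 0 such that ∫_x^∞ ρ(y) dy ≥ C x^{-τ} for all x ≥ x_0. Then Σ_k (γ_k/α_k)^τ < ∞. -/
open MeasureTheory Filter ProbabilityTheory

/-!
Call the `k`-th coordinate large when `|u k| > α k / γ k`, i.e. when `|γ k u k / α k| > 1`.
Almost surely only finitely many coordinates are large, so by the second Borel–Cantelli lemma the
probabilities of these independent events have a finite sum. The tail bound gives
`P(|u k| > α k / γ k) ≥ C (max x₀ (α k / γ k))^{-τ}`, and summability of the right-hand side forces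
`α k / γ k ≥ x₀` eventually, whence `∑ (γ k / α k)^τ < ∞`.
-/

theorem MeasureTheory.ofReal_integral_le_lintegral_ofReal {α : Type*} [MeasurableSpace α]
    {μ : Measure α} (f : α → ℝ) :
    ENNReal.ofReal (∫ x, f x ∂μ) ≤ ∫⁻ x, ENNReal.ofReal (f x) ∂μ := by
  by_cases hf : Integrable f μ
  · rw [integral_eq_lintegral_pos_part_sub_lintegral_neg_part hf]
    calc ENNReal.ofReal ((∫⁻ x, ENNReal.ofReal (f x) ∂μ).toReal
            - (∫⁻ x, ENNReal.ofReal (-f x) ∂μ).toReal)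
        ≤ ENNReal.ofReal (∫⁻ x, ENNReal.ofReal (f x) ∂μ).toReal :=
          ENNReal.ofReal_le_ofReal (sub_le_self _ ENNReal.toReal_nonneg)
      _ ≤ ∫⁻ x, ENNReal.ofReal (f x) ∂μ := ENNReal.ofReal_toReal_le
  · simp [integral_undef hf]

theorem summable_of_tsum_ofReal_ne_top {ι : Type*} {f : ι → ℝ} (hf : ∀ i, 0 ≤ f i)
    (h : ∑' i, ENNReal.ofReal (f i) ≠ ⊤) : Summable f :=
  (ENNReal.summable_toReal h).congr fun i => ENNReal.toReal_ofReal (hf i)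

theorem eventually_abs_le_one_of_summable_abs_rpow {ι : Type*} {a : ι → ℝ} {p : ℝ} (hp : 0 ≤ p)
    (h : Summable fun i => |a i| ^ p) : ∀ᶠ i in cofinite, |a i| ≤ 1 := by
  filter_upwards [h.tendsto_cofinite_zero.eventually (gt_mem_nhds one_pos)] with i hi
  by_contra! hgt
  exact hi.not_ge (Real.one_le_rpow hgt.le hp)

theorem summable_rpow_neg_of_summable_max_rpow_neg {ι : Type*} {r : ι → ℝ} {x₀ τ : ℝ}
    (hx₀ : 0 < x₀) (h : Summable fun i => max x₀ (r i) ^ (-τ)) :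
    Summable fun i => r i ^ (-τ) := by
  refine h.congr_cofinite ?_
  filter_upwards [h.tendsto_cofinite_zero.eventually
    (gt_mem_nhds (Real.rpow_pos_of_pos hx₀ (-τ)))] with i hi
  have hx₀r : x₀ ≤ r i := by
    by_contra! hlt
    rw [max_eq_left hlt.le] at hi
    exact lt_irrefl _ hi
  rw [max_eq_right hx₀r]

theorem abs_mul_div_le_one_iff {a b y : ℝ} (ha : 0 < a) (hb : 0 < b) :
    |a * y / b| ≤ 1 ↔ |y| ≤ b / a := by
  rw [abs_div, abs_mul, abs_of_pos ha, abs_of_pos hb, div_le_one hb, le_div_iff₀ ha, mul_comm]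

namespace ProbabilityTheory

variable {Ω : Type*} [MeasurableSpace Ω] {μ : Measure Ω}

theorem iIndepFun.iIndepSet_preimage {ι β : Type*} [MeasurableSpace β] {f : ι → Ω → β}
    (hf : iIndepFun f μ) {A : ι → Set β} (hA : ∀ i, MeasurableSet (A i)) :
    iIndepSet (fun i => f i ⁻¹' A i) μ := by
  rw [← iIndep_comap_mem_iff]
  exact (iIndepFun_iff_iIndep _ _ _).1
    (hf.comp (fun i (y : β) => y ∈ A i) fun i => measurableSet_setOfPred.mp (by simpa using hA i))

theorem tsum_measure_ne_top_of_ae_eventually_notMem {s : ℕ → Set Ω}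
    (hsm : ∀ n, MeasurableSet (s n)) (hs : iIndepSet s μ)
    (h : ∀ᵐ ω ∂μ, ∀ᶠ n in atTop, ω ∉ s n) : ∑' n, μ (s n) ≠ ⊤ := by
  intro htop
  have hlimsup : μ (limsup s atTop) = 0 := by
    rw [← compl_mem_ae_iff]
    filter_upwards [h] with ω hω
    simpa [mem_limsup_iff_frequently_mem, Filter.Frequently] using hω
  simpa [hlimsup] using measure_limsup_eq_one hsm hs htop

theorem ofReal_setIntegral_Ioi_le_measure_lt_abs {X : Ω → ℝ} (hX : Measurable X) {ρ : ℝ → ℝ}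
    (hlaw : μ.map X = volume.withDensity fun y => ENNReal.ofReal (ρ y)) {r x : ℝ} (hrx : r ≤ x) :
    ENNReal.ofReal (∫ y in Set.Ioi x, ρ y) ≤ μ {ω | r < |X ω|} := by
  have hA : MeasurableSet {y : ℝ | r < |y|} := measurableSet_lt measurable_const measurable_abs
  have hsub : Set.Ioi x ⊆ {y : ℝ | r < |y|} := fun y hy =>
    hrx.trans_lt (lt_of_lt_of_le hy (le_abs_self y))
  calc ENNReal.ofReal (∫ y in Set.Ioi x, ρ y)
      ≤ ∫⁻ y in Set.Ioi x, ENNReal.ofReal (ρ y) := ofReal_integral_le_lintegral_ofReal ρ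
    _ ≤ ∫⁻ y in {y : ℝ | r < |y|}, ENNReal.ofReal (ρ y) := lintegral_mono_set hsub
    _ = μ {ω | r < |X ω|} := by
      rw [← withDensity_apply _ hA, ← hlaw, Measure.map_apply hX hA]
      rfl

end ProbabilityTheory

theorem stmt3_general {Ω : Type*} [MeasurableSpace Ω] (P : Measure Ω) [IsProbabilityMeasure P]
    (u : ℕ → Ω → ℝ) (hmeas : ∀ k, Measurable (u k))
    (hindep : ProbabilityTheory.iIndepFun u P)
    (ρ : ℝ → ℝ)
    (hlaw : ∀ k, P.map (u k) = volume.withDensity (fun y => ENNReal.ofReal (ρ y)))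
    (γ α : ℕ → ℝ) (hγ : ∀ k, 0 < γ k) (hα : ∀ k, 0 < α k)
    (p : ℝ) (hp : 1 ≤ p)
    (hsum : ∀ᵐ ω ∂P, Summable fun k => |γ k * u k ω / α k| ^ p)
    (C x₀ τ : ℝ) (hC : 0 < C) (hx₀ : 0 < x₀)
    (htail : ∀ x, x₀ ≤ x → C * x ^ (-τ) ≤ ∫ y in Set.Ioi x, ρ y) :
    Summable fun k => (γ k / α k) ^ τ := by
  set r : ℕ → ℝ := fun k => α k / γ k
  set s : ℕ → Set Ω := fun k => {ω | r k < |u k ω|}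
  have hs_meas : ∀ k, MeasurableSet (s k) := fun k =>
    measurableSet_lt measurable_const (hmeas k).abs
  have hs_indep : iIndepSet s P :=
    hindep.iIndepSet_preimage fun k => measurableSet_lt measurable_const measurable_abs
  have hs_fin : ∀ᵐ ω ∂P, ∀ᶠ k in atTop, ω ∉ s k := by
    filter_upwards [hsum] with ω hω
    rw [← Nat.cofinite_eq_atTop]
    filter_upwards [eventually_abs_le_one_of_summable_abs_rpow (by linarith) hω] with k hk
    exact ((abs_mul_div_le_one_iff (hγ k) (hα k)).1 hk).not_gt
  have hbound : ∀ k, ENNReal.ofReal (C * max x₀ (r k) ^ (-τ)) ≤ P (s k) := fun k =>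
    (ENNReal.ofReal_le_ofReal (htail _ (le_max_left _ _))).trans
      (ofReal_setIntegral_Ioi_le_measure_lt_abs (hmeas k) (hlaw k) (le_max_right _ _))
  have hmax : Summable fun k => max x₀ (r k) ^ (-τ) := by
    refine (summable_mul_left_iff hC.ne').1 (summable_of_tsum_ofReal_ne_top (fun k => ?_) ?_)
    · exact mul_nonneg hC.le (Real.rpow_nonneg (hx₀.le.trans (le_max_left _ _)) _)
    · exact ne_top_of_le_ne_top
        (tsum_measure_ne_top_of_ae_eventually_notMem hs_meas hs_indep hs_fin)
        (ENNReal.tsum_le_tsum hbound)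
  refine (summable_rpow_neg_of_summable_max_rpow_neg hx₀ hmax).congr fun k => ?_
  have hr : 0 ≤ r k := (div_pos (hα k) (hγ k)).le
  rw [Real.rpow_neg hr, ← Real.inv_rpow hr, inv_div]

/-- Under the assumptions of the previous statement, if additionally the density `ρ`
satisfies the tail lower bound `∫_x^∞ ρ ≥ C x^{-τ}` for all `x ≥ x₀`, then
`∑ k (γ k / α k) ^ τ < ∞`. -/
theorem stmt3 {Ω : Type*} [MeasurableSpace Ω] (P : Measure Ω) [IsProbabilityMeasure P]
    (u : ℕ → Ω → ℝ) (hmeas : ∀ k, Measurable (u k))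
    (hindep : ProbabilityTheory.iIndepFun u P)
    (ρ : ℝ → ℝ) (hρmeas : Measurable ρ) (hρpos : ∀ y, 0 < ρ y)
    (hρeven : ∀ y, ρ (-y) = ρ y)
    (hlaw : ∀ k, P.map (u k) = volume.withDensity (fun y => ENNReal.ofReal (ρ y)))
    (γ α : ℕ → ℝ) (hγ : ∀ k, 0 < γ k) (hα : ∀ k, 0 < α k)
    (p : ℝ) (hp : 1 ≤ p)
    (hsum : ∀ᵐ ω ∂P, Summable fun k => |γ k * u k ω / α k| ^ p)
    (C x₀ τ : ℝ) (hC : 0 < C) (hx₀ : 0 < x₀) (hτ : 0 < τ)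
    (htail : ∀ x, x₀ ≤ x → C * x ^ (-τ) ≤ ∫ y in Set.Ioi x, ρ y) :
    Summable fun k => (γ k / α k) ^ τ :=
  stmt3_general P u hmeas hindep ρ hlaw γ α hγ hα p hp hsum C x₀ τ hC hx₀ htail
end

section
/- Let s > 0 and let f, g : [-s,s] → [0,∞) both be even functions whose restrictions to [0,s] are monotonically decreasing. Then for every v ∈ ℝ, ∫_{-s}^{s} f(u+v) g(u) du ≤ ∫_{-s}^{s} f(u) g(u) du. -/
/-!
Write the weight as a layer cake, `g u = ∫₀^∞ 1{t < g u} dt`. Since `g` is even and decreasing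
in `|u|`, each super-level set `[-s, s] ∩ {t < g}` is a centred interval `(-r, r)` up to a null
set, so it suffices to compare `∫_{-r}^{r} f (u + v) du` with `∫_{-r}^{r} f u du`. For `v ≥ 0`
the shifted window trades `[-r, -r + v]` for `[r, r + v]`, and `x ↦ x + 2r` maps the former onto
the latter while moving every point away from `0`, where `f` only gets smaller.
-/

/-- A function `ℝ → ℝ` has the symmetric decay property if it is even and its
restriction to `[0,∞)` is monotonically decreasing. -/
def SymDecay (f : ℝ → ℝ) : Prop :=
  (∀ x, f (-x) = f x) ∧ AntitoneOn f (Set.Ici 0)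

open MeasureTheory Set intervalIntegral
open scoped ENNReal

theorem lintegral_mul_ofReal_eq_lintegral_meas_lt {α : Type*} [MeasurableSpace α]
    (μ : Measure α) {w : α → ℝ≥0∞} {g : α → ℝ} (hw : Measurable w) (hg : Measurable g)
    (hg0 : 0 ≤ᵐ[μ] g) :
    ∫⁻ x, w x * ENNReal.ofReal (g x) ∂μ = ∫⁻ t in Ioi 0, ∫⁻ x in {x | t < g x}, w x ∂μ := by
  calc _ = ∫⁻ x, ENNReal.ofReal (g x) ∂μ.withDensity w :=
        (lintegral_withDensity_eq_lintegral_mul μ hw (ENNReal.measurable_ofReal.comp hg)).symm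
    _ = _ := by
      rw [lintegral_eq_lintegral_meas_lt _ (withDensity_absolutelyContinuous μ w hg0)
        hg.aemeasurable]
      exact lintegral_congr fun t => withDensity_apply w (measurableSet_lt measurable_const hg)

theorem exists_ae_eq_Ioo_of_abs_le_mem {A : Set ℝ} (hA : Bornology.IsBounded A)
    (habs : ∀ x ∈ A, ∀ y, |y| ≤ |x| → y ∈ A) : ∃ r, 0 ≤ r ∧ A =ᵐ[volume] Ioo (-r) r := by
  rcases A.eq_empty_or_nonempty with rfl | hne
  · exact ⟨0, le_rfl, by simp⟩
  obtain ⟨C, hC⟩ := hA.exists_norm_le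
  have hbdd : BddAbove (abs '' A) := ⟨C, by rintro _ ⟨x, hx, rfl⟩; exact hC x hx⟩
  set r := sSup (abs '' A)
  have hIoo : Ioo (-r) r ⊆ A := fun u hu => by
    obtain ⟨_, ⟨x, hx, rfl⟩, hux⟩ := exists_lt_of_lt_csSup (hne.image _) (abs_lt.2 hu)
    exact habs x hx u hux.le
  have hIcc : A ⊆ Icc (-r) r := fun x hx => abs_le.1 (le_csSup hbdd (mem_image_of_mem _ hx))
  refine ⟨r, Real.sSup_nonneg (by rintro _ ⟨x, -, rfl⟩; exact abs_nonneg x), ?_⟩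
  exact (hIcc.eventuallyLE.trans Ioo_ae_eq_Icc.symm.le).antisymm hIoo.eventuallyLE

namespace SymDecay

variable {f : ℝ → ℝ}

theorem comp_abs (hf : SymDecay f) (x : ℝ) : f |x| = f x := by
  rcases abs_choice x with h | h <;> simp only [h, hf.1]

theorem le_of_abs_le (hf : SymDecay f) {x y : ℝ} (h : |y| ≤ |x|) : f x ≤ f y := by
  rw [← hf.comp_abs x, ← hf.comp_abs y]
  exact hf.2 (abs_nonneg y) (abs_nonneg x) h

theorem le_apply_zero (hf : SymDecay f) (x : ℝ) : f x ≤ f 0 :=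
  hf.le_of_abs_le (by simp)

theorem measurable (hf : SymDecay f) : Measurable f := by
  have hanti : Antitone fun x => f (max x 0) := fun x y hxy =>
    hf.2 (le_max_right x 0) (le_max_right y 0) (max_le_max_right 0 hxy)
  have hcomp : f = (fun x => f (max x 0)) ∘ abs := by
    ext x
    simp [hf.comp_abs]
  rw [hcomp]
  exact hanti.measurable.comp measurable_abs

theorem norm_le (hf : SymDecay f) (hf0 : ∀ x, 0 ≤ f x) (x : ℝ) : ‖f x‖ ≤ f 0 := by
  rw [Real.norm_of_nonneg (hf0 x)]
  exact hf.le_apply_zero x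

theorem intervalIntegrable (hf : SymDecay f) (hf0 : ∀ x, 0 ≤ f x) (a b : ℝ) :
    IntervalIntegrable f volume a b :=
  intervalIntegrable_iff.2 <| Measure.integrableOn_of_bounded measure_Ioc_lt_top.ne
    hf.measurable.aestronglyMeasurable (Filter.Eventually.of_forall (hf.norm_le hf0))

theorem integral_comp_add_le_of_nonneg (hf : SymDecay f) (hf0 : ∀ x, 0 ≤ f x) {r v : ℝ}
    (hr : 0 ≤ r) (hv : 0 ≤ v) : ∫ u in (-r)..r, f (u + v) ≤ ∫ u in (-r)..r, f u := by
  have hI := hf.intervalIntegrable hf0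
  have hshift : ∫ u in (-r)..r, f (u + v)
      = (∫ u in (-r)..r, f u) - (∫ u in (-r)..(-r + v), f u) + ∫ u in r..(r + v), f u := by
    rw [integral_comp_add_right, ← integral_add_adjacent_intervals (hI (-r + v) r) (hI r (r + v)),
      ← integral_interval_sub_left (hI (-r) r) (hI (-r) (-r + v))]
  have hmirror : ∫ u in r..(r + v), f u ≤ ∫ u in (-r)..(-r + v), f u := by
    calc ∫ u in r..(r + v), f u = ∫ u in (-r)..(-r + v), f (u + 2 * r) := by
          rw [integral_comp_add_right]; ring_nf
      _ ≤ ∫ u in (-r)..(-r + v), f u := by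
          refine integral_mono_on (by linarith)
            ((IntervalIntegrable.comp_add_right_iff).2 (hI _ _)) (hI _ _) ?_
          intro x hx
          exact hf.le_of_abs_le ((abs_le.2 ⟨by linarith [hx.1], by linarith⟩).trans (le_abs_self _))
  linarith

theorem integral_comp_add_le (hf : SymDecay f) (hf0 : ∀ x, 0 ≤ f x) {r : ℝ} (hr : 0 ≤ r)
    (v : ℝ) : ∫ u in (-r)..r, f (u + v) ≤ ∫ u in (-r)..r, f u := by
  rcases le_total 0 v with hv | hv
  · exact hf.integral_comp_add_le_of_nonneg hf0 hr hv
  · have hflip : ∫ u in (-r)..r, f (u + v) = ∫ u in (-r)..r, f (u + -v) :=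
      calc ∫ u in (-r)..r, f (u + v) = ∫ u in (-r)..r, f (-u + -v) := by
            congr 1 with u
            rw [← hf.1, neg_add]
        _ = _ := by simpa using integral_comp_neg (a := -r) (b := r) fun u => f (u + -v)
    rw [hflip]
    exact hf.integral_comp_add_le_of_nonneg hf0 hr (neg_nonneg.2 hv)

theorem setLIntegral_Ioo_comp_add_le (hf : SymDecay f) (hf0 : ∀ x, 0 ≤ f x) {r : ℝ}
    (hr : 0 ≤ r) (v : ℝ) :
    ∫⁻ u in Ioo (-r) r, ENNReal.ofReal (f (u + v)) ≤ ∫⁻ u in Ioo (-r) r, ENNReal.ofReal (f u) := by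
  have hI := hf.intervalIntegrable hf0 (-r) r
  rw [setLIntegral_congr Ioo_ae_eq_Ioc, setLIntegral_congr Ioo_ae_eq_Ioc,
    ← ofReal_integral_eq_lintegral_ofReal hI.1 (ae_of_all _ fun _ => hf0 _),
    ← ofReal_integral_eq_lintegral_ofReal
      ((IntervalIntegrable.comp_add_right_iff).2 (hf.intervalIntegrable hf0 _ _)).1
      (ae_of_all _ fun _ => hf0 _),
    ← integral_of_le (by linarith), ← integral_of_le (by linarith)]
  exact ENNReal.ofReal_le_ofReal (hf.integral_comp_add_le hf0 hr v)

theorem exists_Icc_inter_superlevel_ae_eq_Ioo (hf : SymDecay f) (s t : ℝ) :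
    ∃ r, 0 ≤ r ∧ (Icc (-s) s ∩ {u | t < f u} : Set ℝ) =ᵐ[volume] Ioo (-r) r :=
  exists_ae_eq_Ioo_of_abs_le_mem (Metric.isBounded_Icc (-s) s |>.subset inter_subset_left)
    fun _ ⟨hxs, hxt⟩ _ hyx =>
      ⟨abs_le.1 (hyx.trans (abs_le.2 hxs)), hxt.trans_le (hf.le_of_abs_le hyx)⟩

theorem ofReal_integral_comp_add_mul_eq_lintegral {g : ℝ → ℝ} (hf : SymDecay f) (hf0 : ∀ x, 0 ≤ f x)
    (hg : SymDecay g) (hg0 : ∀ x, 0 ≤ g x) {s : ℝ} (hs : 0 ≤ s) (v : ℝ) :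
    ENNReal.ofReal (∫ u in (-s)..s, f (u + v) * g u)
      = ∫⁻ t in Ioi 0, ∫⁻ u in Icc (-s) s ∩ {u | t < g u}, ENNReal.ofReal (f (u + v)) := by
  have hfv : Measurable fun u => f (u + v) := hf.measurable.comp (measurable_add_const v)
  have hint : IntegrableOn (fun u => f (u + v) * g u) (Icc (-s) s) :=
    Measure.integrableOn_of_bounded measure_Icc_lt_top.ne
      (hfv.mul hg.measurable).aestronglyMeasurable
      (ae_of_all _ fun u => (norm_mul_le _ _).trans <|
        mul_le_mul (hf.norm_le hf0 _) (hg.norm_le hg0 _) (norm_nonneg _) (hf0 0))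
  rw [integral_of_le (by linarith), ← integral_Icc_eq_integral_Ioc,
    ofReal_integral_eq_lintegral_ofReal hint (ae_of_all _ fun u => mul_nonneg (hf0 _) (hg0 u))]
  simp only [ENNReal.ofReal_mul (hf0 _)]
  rw [lintegral_mul_ofReal_eq_lintegral_meas_lt _ (w := fun u => ENNReal.ofReal (f (u + v)))
    (ENNReal.measurable_ofReal.comp hfv) hg.measurable (ae_of_all _ hg0)]
  refine lintegral_congr fun t => ?_
  rw [Measure.restrict_restrict (measurableSet_lt measurable_const hg.measurable), inter_comm]

end SymDecay

/-- Correlation of a symmetric decaying function against a symmetric decaying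
weight is maximized at shift zero. -/
theorem stmt8 (s : ℝ) (hs : 0 < s)
    (f g : ℝ → ℝ) (hf0 : ∀ x, 0 ≤ f x) (hg0 : ∀ x, 0 ≤ g x)
    (hf : SymDecay f) (hg : SymDecay g) (v : ℝ) :
    ∫ u in (-s)..s, f (u + v) * g u ≤ ∫ u in (-s)..s, f u * g u := by
  have hlayer := hf.ofReal_integral_comp_add_mul_eq_lintegral hf0 hg hg0 hs.le
  have hlayer0 := hlayer 0
  simp only [add_zero] at hlayer0
  rw [← ENNReal.ofReal_le_ofReal_iff
      (integral_nonneg (by linarith) fun u _ => mul_nonneg (hf0 u) (hg0 u)),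
    hlayer v, hlayer0]
  refine lintegral_mono fun t => ?_
  obtain ⟨r, hr, hae⟩ := hg.exists_Icc_inter_superlevel_ae_eq_Ioo s t
  rw [setLIntegral_congr hae, setLIntegral_congr hae]
  exact hf.setLIntegral_Ioo_comp_add_le hf0 hr v
end

section
/- For 1 < p ≤ 2 and all real x, y: |x+y|^p + |x-y|^p ≥ 2^{p-1}(|x|^p + |y|^p). -/
/-!
Put `q = p / 2 ∈ (0, 1]` and write `|z| ^ p = (z ^ 2) ^ q`. Concavity of `t ↦ t ^ q` and the
parallelogram law `(u + v)² + (u - v)² = 2 (u² + v²)` give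
`|u + v| ^ p + |u - v| ^ p ≤ 2 (u² + v²) ^ q`, and subadditivity of `t ↦ t ^ q` bounds this by
`2 (|u| ^ p + |v| ^ p)`. Substituting `u = x + y`, `v = x - y` turns this direct Clarkson
inequality into the reverse one, since `|2x| ^ p = 2 ^ p |x| ^ p`.
-/

open Real

lemma abs_rpow_eq_sq_rpow_half (z p : ℝ) : |z| ^ p = (z ^ 2) ^ (p / 2) := by
  rw [← sq_abs, ← rpow_natCast, ← rpow_mul (abs_nonneg z)]
  norm_num [mul_div_cancel₀]

lemma rpow_add_rpow_le_two_mul_rpow_add_div_two {a b q : ℝ} (ha : 0 ≤ a) (hb : 0 ≤ b)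
    (hq₀ : 0 ≤ q) (hq₁ : q ≤ 1) : a ^ q + b ^ q ≤ 2 * ((a + b) / 2) ^ q := by
  have h := (concaveOn_rpow hq₀ hq₁).2 (Set.mem_Ici.2 ha) (Set.mem_Ici.2 hb)
    (by norm_num : (0 : ℝ) ≤ 1 / 2) (by norm_num : (0 : ℝ) ≤ 1 / 2) (by norm_num)
  simp only [smul_eq_mul] at h
  rw [show 1 / 2 * a + 1 / 2 * b = (a + b) / 2 by ring] at h
  linarith

lemma abs_add_rpow_add_abs_sub_rpow_le {p : ℝ} (hp₀ : 0 ≤ p) (hp₂ : p ≤ 2) (u v : ℝ) :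
    |u + v| ^ p + |u - v| ^ p ≤ 2 * (|u| ^ p + |v| ^ p) := by
  simp only [abs_rpow_eq_sq_rpow_half _ p]
  have hq₀ : 0 ≤ p / 2 := by positivity
  have hq₁ : p / 2 ≤ 1 := by linarith
  calc ((u + v) ^ 2) ^ (p / 2) + ((u - v) ^ 2) ^ (p / 2)
      ≤ 2 * (((u + v) ^ 2 + (u - v) ^ 2) / 2) ^ (p / 2) :=
        rpow_add_rpow_le_two_mul_rpow_add_div_two (sq_nonneg _) (sq_nonneg _) hq₀ hq₁
    _ = 2 * (u ^ 2 + v ^ 2) ^ (p / 2) := by ring_nf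
    _ ≤ 2 * ((u ^ 2) ^ (p / 2) + (v ^ 2) ^ (p / 2)) := by
        gcongr
        exact rpow_add_le_add_rpow (sq_nonneg _) (sq_nonneg _) hq₀ hq₁

/-- Clarkson's inequality (reverse form) for real numbers, `1 < p ≤ 2`. -/
theorem stmt11 (p : ℝ) (hp : 1 < p) (hp2 : p ≤ 2) (x y : ℝ) :
    2 ^ (p - 1) * (|x| ^ p + |y| ^ p) ≤ |x + y| ^ p + |x - y| ^ p := by
  have h := abs_add_rpow_add_abs_sub_rpow_le (by linarith) hp2 (x + y) (x - y)
  have abs_two_mul_rpow (z : ℝ) : |2 * z| ^ p = 2 ^ p * |z| ^ p := by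
    rw [abs_mul, mul_rpow (abs_nonneg _) (abs_nonneg _), abs_two]
  rw [show x + y + (x - y) = 2 * x by ring, show x + y - (x - y) = 2 * y by ring,
    abs_two_mul_rpow, abs_two_mul_rpow] at h
  rw [rpow_sub_one two_ne_zero]
  linarith
end

section
/- For 1 ≤ p ≤ 2 and all real u, v: e^{-|u+v|^p} + e^{-|u-v|^p} ≥ 2 e^{-|u|^p - |v|^p}. -/
/-!
Since `e^x ≥ 1 + x`, each term satisfies `e^{-|u±v|^p} ≥ e^{-s} (1 + s - |u±v|^p)` with
`s = |u|^p + |v|^p`, so the sum is at least `e^{-s} (2 + 2s - |u+v|^p - |u-v|^p) ≥ 2 e^{-s}` by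
the parallelogram-type inequality `|u+v|^p + |u-v|^p ≤ 2 (|u|^p + |v|^p)`. For `p ≤ 2` the latter
follows from the parallelogram law `(u+v)^2 + (u-v)^2 = 2 (u^2 + v^2)` because `t ↦ t^{p/2}` is
concave and subadditive on `[0, ∞)`.
-/

open Real

lemma sq_rpow_div_two (x p : ℝ) : (x ^ 2) ^ (p / 2) = |x| ^ p := by
  rw [← sq_abs, ← rpow_natCast, ← rpow_mul (abs_nonneg x)]
  push_cast
  rw [mul_div_cancel₀ p two_ne_zero]

lemma exp_mul_sub_add_one_le_exp (a b : ℝ) : exp a * (b - a + 1) ≤ exp b := by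
  calc exp a * (b - a + 1) ≤ exp a * exp (b - a) := by gcongr; exact add_one_le_exp _
    _ = exp b := by rw [← exp_add, add_sub_cancel]

/-- For `1 ≤ p ≤ 2`: `e^{-|u+v|^p} + e^{-|u-v|^p} ≥ 2 e^{-|u|^p - |v|^p}`. -/
theorem stmt13 (p : ℝ) (hp : 1 ≤ p) (hp2 : p ≤ 2) (u v : ℝ) :
    2 * Real.exp (-|u| ^ p - |v| ^ p) ≤
      Real.exp (-|u + v| ^ p) + Real.exp (-|u - v| ^ p) := by
  have hpar := abs_add_rpow_add_abs_sub_rpow_le (by linarith) hp2 u v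
  have hplus := exp_mul_sub_add_one_le_exp (-|u| ^ p - |v| ^ p) (-|u + v| ^ p)
  have hminus := exp_mul_sub_add_one_le_exp (-|u| ^ p - |v| ^ p) (-|u - v| ^ p)
  nlinarith [exp_pos (-|u| ^ p - |v| ^ p)]
end

section
/- Let ρ(u) ∝ exp(-|u|^p) with 1 ≤ p ≤ 2, and let V_r(h,a,b) be as above with ρ_k(x) = γ_k^{-1} ρ(γ_k^{-1} x). Then for any h with |h_k/γ_k| ≤ 1 for k ∈ [a+1:b], V_r(h,a,b) ≥ V_r(0,a,b) · Π_{k=a+1}^b exp(-|h_k/γ_k|^p). -/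
/-!
The domain of integration and the weight `sliceBallVol p α₁ (r ^ p - ∑ j, |u j / α₂ j| ^ p)`
depend on `u` only through the `|u j|`, so flipping the signs of any set of coordinates preserves
the integral defining `V_r(h)`. Expanding `∏ j, (g j (u j) + g j (-u j))` into the `2 ^ c` sign
patterns therefore shows that `V_r(h)` does not change when each shifted density
`g j x = ρ_j (x + h_j)` is replaced by its even part. For `0 ≤ p ≤ 2`, the inequality
`|x + y| ^ p + |x - y| ^ p ≤ 2 (|x| ^ p + |y| ^ p)` (concavity and subadditivity of `t ↦ t ^ (p/2)`)
together with convexity of `exp` gives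
`exp (-|x| ^ p) exp (-|y| ^ p) ≤ (exp (-|x + y| ^ p) + exp (-|x - y| ^ p)) / 2`,
which bounds the even part of `g j` below by `exp (-|h_j / γ_j| ^ p) ρ_j`.
-/
open MeasureTheory

/-- Lebesgue volume of the weighted `ℓ^p`-ball `{v : ℝ^a | ∑ |v_i/α_i|^p < t}`. -/
noncomputable def sliceBallVol (p : ℝ) {a : ℕ} (α₁ : Fin a → ℝ) (t : ℝ) : ℝ :=
  (volume {v : Fin a → ℝ | ∑ i, |v i / α₁ i| ^ p < t}).toReal

/-- `V_r(h,a,b)`. -/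
noncomputable def Vr (p r : ℝ) {a c : ℕ} (α₁ : Fin a → ℝ) (α₂ : Fin c → ℝ)
    (ρ₂ : Fin c → ℝ → ℝ) (h₂ : Fin c → ℝ) : ℝ :=
  ∫ u in {u : Fin c → ℝ | ∑ j, |u j / α₂ j| ^ p < r ^ p},
    (∏ j, ρ₂ j (u j + h₂ j)) *
      sliceBallVol p α₁ (r ^ p - ∑ j, |u j / α₂ j| ^ p)

open Real

lemma abs_add_rpow_add_abs_sub_rpow_le_s17 {p : ℝ} (hp0 : 0 ≤ p) (hp2 : p ≤ 2) (x y : ℝ) :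
    |x + y| ^ p + |x - y| ^ p ≤ 2 * (|x| ^ p + |y| ^ p) := by
  set q := p / 2
  have hq0 : 0 ≤ q := by positivity
  have hq1 : q ≤ 1 := by simp only [q]; linarith
  have abs_rpow (z : ℝ) : |z| ^ p = (z ^ 2) ^ q := by
    rw [← sq_abs, ← rpow_natCast, ← rpow_mul (abs_nonneg z)]
    norm_num [q, mul_div_cancel₀]
  have midpoint := (concaveOn_rpow hq0 hq1).2 (Set.mem_Ici.2 (sq_nonneg (x + y)))
    (Set.mem_Ici.2 (sq_nonneg (x - y))) (by norm_num : (0 : ℝ) ≤ 1 / 2)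
    (by norm_num : (0 : ℝ) ≤ 1 / 2) (by norm_num)
  have parallelogram : (1 / 2 : ℝ) • (x + y) ^ 2 + (1 / 2 : ℝ) • (x - y) ^ 2 = x ^ 2 + y ^ 2 := by
    simp only [smul_eq_mul]; ring
  rw [parallelogram, smul_eq_mul, smul_eq_mul] at midpoint
  have subadditive := rpow_add_le_add_rpow (sq_nonneg x) (sq_nonneg y) hq0 hq1
  simp only [abs_rpow]
  linarith

lemma two_mul_exp_neg_abs_rpow_mul_le {p : ℝ} (hp0 : 0 ≤ p) (hp2 : p ≤ 2) (x y : ℝ) :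
    2 * (exp (-|x| ^ p) * exp (-|y| ^ p)) ≤ exp (-|x + y| ^ p) + exp (-|x - y| ^ p) := by
  have hconv := convexOn_exp.2 (Set.mem_univ (-|x + y| ^ p)) (Set.mem_univ (-|x - y| ^ p))
    (by norm_num : (0 : ℝ) ≤ 1 / 2) (by norm_num : (0 : ℝ) ≤ 1 / 2) (by norm_num)
  simp only [smul_eq_mul] at hconv
  have hmono : exp (-|x| ^ p) * exp (-|y| ^ p) ≤
      exp (1 / 2 * -|x + y| ^ p + 1 / 2 * -|x - y| ^ p) := by
    rw [← exp_add, exp_le_exp]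
    linarith [abs_add_rpow_add_abs_sub_rpow_le_s17 hp0 hp2 x y]
  linarith

lemma two_mul_mul_exp_neg_abs_inv_mul_rpow_le {p : ℝ} (hp0 : 0 ≤ p) (hp2 : p ≤ 2) {s C : ℝ}
    (hC : 0 ≤ C) (x h : ℝ) :
    2 * (C * exp (-|s⁻¹ * x| ^ p) * exp (-|h / s| ^ p)) ≤
      C * exp (-|s⁻¹ * (x + h)| ^ p) + C * exp (-|s⁻¹ * (-x + h)| ^ p) := by
  have h2pt := two_mul_exp_neg_abs_rpow_mul_le hp0 hp2 (s⁻¹ * x) (h / s)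
  rw [show s⁻¹ * x + h / s = s⁻¹ * (x + h) by ring,
    show s⁻¹ * x - h / s = -(s⁻¹ * (-x + h)) by ring, abs_neg] at h2pt
  calc 2 * (C * exp (-|s⁻¹ * x| ^ p) * exp (-|h / s| ^ p))
      = C * (2 * (exp (-|s⁻¹ * x| ^ p) * exp (-|h / s| ^ p))) := by ring
    _ ≤ C * (exp (-|s⁻¹ * (x + h)| ^ p) + exp (-|s⁻¹ * (-x + h)| ^ p)) :=
      mul_le_mul_of_nonneg_left h2pt hC
    _ = _ := mul_add _ _ _

section SignFlips

variable {ι : Type*} [Fintype ι]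

lemma measurePreserving_mul_left_of_abs_eq_one {ε : ι → ℝ} (hε : ∀ i, |ε i| = 1) :
    MeasurePreserving (ε * ·) (volume : Measure (ι → ℝ)) volume := by
  have hcoord (i : ι) : MeasurePreserving (ε i * ·) (volume : Measure ℝ) volume := by
    have hε0 : ε i ≠ 0 := by intro h; simpa [h] using hε i
    refine ⟨measurable_const_mul _, ?_⟩
    rw [Real.map_volume_mul_left hε0, abs_inv, hε i, inv_one, ENNReal.ofReal_one, one_smul]
  rw [volume_pi]
  exact measurePreserving_pi _ _ hcoord

variable [DecidableEq ι] {μ : Measure (ι → ℝ)}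

theorem integral_prod_add_comp_neg_mul
    (hμ : ∀ ε : ι → ℝ, (∀ i, |ε i| = 1) → MeasurePreserving (ε * ·) μ μ)
    {W : (ι → ℝ) → ℝ} (hW : ∀ ε : ι → ℝ, (∀ i, |ε i| = 1) → ∀ u, W (ε * u) = W u)
    {g : ι → ℝ → ℝ} (hg : Integrable (fun u => (∏ i, g i (u i)) * W u) μ) :
    ∫ u, (∏ i, (g i (u i) + g i (-u i))) * W u ∂μ =
      2 ^ Fintype.card ι * ∫ u, (∏ i, g i (u i)) * W u ∂μ := by
  set signs : Finset (ι → ℝ) := Fintype.piFinset fun _ => {1, -1}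
  have abs_of_mem {ε} (hε : ε ∈ signs) (i : ι) : |ε i| = 1 := by
    rcases Finset.mem_insert.1 (Fintype.mem_piFinset.1 hε i) with h | h <;>
      simp_all
  have expand (u : ι → ℝ) :
      (∏ i, (g i (u i) + g i (-u i))) * W u =
        ∑ ε ∈ signs, (∏ i, g i ((ε * u) i)) * W (ε * u) := by
    have hpair (i : ι) : g i (u i) + g i (-u i) = ∑ e ∈ ({1, -1} : Finset ℝ), g i (e * u i) := by
      rw [Finset.sum_pair (by norm_num), one_mul, neg_one_mul]
    simp_rw [hpair, Finset.prod_univ_sum, Finset.sum_mul]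
    refine Finset.sum_congr rfl fun ε hε => ?_
    rw [hW ε (abs_of_mem hε)]
    rfl
  have flip_invariant {ε} (hε : ε ∈ signs) :
      ∫ u, (∏ i, g i ((ε * u) i)) * W (ε * u) ∂μ = ∫ u, (∏ i, g i (u i)) * W u ∂μ := by
    have h := hμ ε (abs_of_mem hε)
    have hmap := integral_map h.measurable.aemeasurable
      (f := fun u => (∏ i, g i (u i)) * W u) (h.map_eq.symm ▸ hg.aestronglyMeasurable)
    rw [h.map_eq] at hmap
    exact hmap.symm
  have term_integrable {ε} (hε : ε ∈ signs) :
      Integrable (fun u => (∏ i, g i ((ε * u) i)) * W (ε * u)) μ :=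
    ((hμ ε (abs_of_mem hε)).integrable_comp hg.aestronglyMeasurable).2 hg
  have card_signs : (signs.card : ℝ) = 2 ^ Fintype.card ι := by
    simp [signs, Fintype.card_piFinset, Finset.card_pair (by norm_num : (1 : ℝ) ≠ -1)]
  simp_rw [expand]
  rw [integral_finsetSum signs fun ε hε => term_integrable hε,
    Finset.sum_congr rfl fun ε hε => flip_invariant hε, Finset.sum_const, nsmul_eq_mul,
    card_signs]

end SignFlips

section WeightedBall

variable {ι : Type*} [Fintype ι] {p : ℝ}

lemma volume_setOf_sum_abs_div_rpow_lt_ne_top (hp : 0 < p) {α : ι → ℝ} (hα : ∀ i, 0 < α i)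
    (t : ℝ) : volume {v : ι → ℝ | ∑ i, |v i / α i| ^ p < t} ≠ ⊤ := by
  have hsub : {v : ι → ℝ | ∑ i, |v i / α i| ^ p < t} ⊆
      Set.univ.pi fun i => Set.Icc (-(α i * t ^ p⁻¹)) (α i * t ^ p⁻¹) := by
    intro v hv i _
    have hterm : |v i / α i| ^ p < t :=
      (Finset.single_le_sum (f := fun k => |v k / α k| ^ p) (fun k _ => by positivity)
        (Finset.mem_univ i)).trans_lt hv
    have hcoord : |v i / α i| ≤ t ^ p⁻¹ :=
      calc |v i / α i| = (|v i / α i| ^ p) ^ p⁻¹ := (rpow_rpow_inv (abs_nonneg _) hp.ne').symm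
        _ ≤ t ^ p⁻¹ := rpow_le_rpow (by positivity) hterm.le (by positivity)
    rw [abs_div, abs_of_pos (hα i), div_le_iff₀ (hα i), mul_comm] at hcoord
    exact abs_le.1 hcoord
  exact ((measure_mono hsub).trans_lt
    (isCompact_univ_pi fun i => isCompact_Icc).measure_lt_top).ne

lemma sum_abs_div_rpow_mul_of_abs_eq_one {ε : ι → ℝ} (hε : ∀ i, |ε i| = 1) (α u : ι → ℝ) :
    ∑ i, |(ε * u) i / α i| ^ p = ∑ i, |u i / α i| ^ p := by
  simp [mul_div_assoc, abs_mul, hε]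

lemma measurableSet_setOf_sum_abs_div_rpow_lt (α : ι → ℝ) (t : ℝ) :
    MeasurableSet {v : ι → ℝ | ∑ i, |v i / α i| ^ p < t} :=
  measurableSet_lt (by fun_prop) measurable_const

lemma measurePreserving_mul_left_restrict_setOf_sum_abs_div_rpow_lt {ε : ι → ℝ}
    (hε : ∀ i, |ε i| = 1) (α : ι → ℝ) (t : ℝ) :
    MeasurePreserving (ε * ·) (volume.restrict {v : ι → ℝ | ∑ i, |v i / α i| ^ p < t})
      (volume.restrict {v : ι → ℝ | ∑ i, |v i / α i| ^ p < t}) := by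
  have h := (measurePreserving_mul_left_of_abs_eq_one hε).restrict_preimage
    (measurableSet_setOf_sum_abs_div_rpow_lt (p := p) α t)
  have hpre : (ε * ·) ⁻¹' {v : ι → ℝ | ∑ i, |v i / α i| ^ p < t} =
      {v : ι → ℝ | ∑ i, |v i / α i| ^ p < t} := by
    ext v
    simp only [Set.mem_preimage, Set.mem_ofPred_eq, sum_abs_div_rpow_mul_of_abs_eq_one hε]
  rwa [hpre] at h

end WeightedBall

lemma sliceBallVol_mono {p : ℝ} (hp : 0 < p) {a : ℕ} {α₁ : Fin a → ℝ} (hα₁ : ∀ i, 0 < α₁ i) :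
    Monotone (sliceBallVol p α₁) := fun _ t hst =>
  ENNReal.toReal_mono (volume_setOf_sum_abs_div_rpow_lt_ne_top hp hα₁ t)
    (measure_mono fun _ hv => lt_of_lt_of_le hv hst)

lemma integrableOn_prod_mul_sliceBallVol {ι : Type*} [Fintype ι] {p : ℝ} (hp : 0 < p) {a : ℕ}
    {α₁ : Fin a → ℝ} (hα₁ : ∀ i, 0 < α₁ i) {α₂ : ι → ℝ} (hα₂ : ∀ j, 0 < α₂ j)
    {g : ι → ℝ → ℝ} (hg : ∀ j, Measurable (g j)) {M : ι → ℝ} (hM : ∀ j x, |g j x| ≤ M j)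
    (t : ℝ) :
    IntegrableOn
      (fun u : ι → ℝ => (∏ j, g j (u j)) * sliceBallVol p α₁ (t - ∑ j, |u j / α₂ j| ^ p))
      {u | ∑ j, |u j / α₂ j| ^ p < t} := by
  have : IsFiniteMeasure (volume.restrict {u : ι → ℝ | ∑ j, |u j / α₂ j| ^ p < t}) :=
    isFiniteMeasure_restrict.2 (volume_setOf_sum_abs_div_rpow_lt_ne_top hp hα₂ t)
  have hmeas : Measurable fun u : ι → ℝ =>
      (∏ j, g j (u j)) * sliceBallVol p α₁ (t - ∑ j, |u j / α₂ j| ^ p) :=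
    (Finset.measurable_prod _ fun j _ => (hg j).comp (measurable_pi_apply j)).mul
      ((sliceBallVol_mono hp hα₁).measurable.comp (measurable_const.sub (by fun_prop)))
  refine Integrable.of_bound hmeas.aestronglyMeasurable ((∏ j, M j) * sliceBallVol p α₁ t)
    (ae_of_all _ fun u => ?_)
  rw [norm_mul, Real.norm_eq_abs, Finset.abs_prod,
    Real.norm_of_nonneg (r := sliceBallVol p α₁ _) ENNReal.toReal_nonneg]
  refine mul_le_mul (Finset.prod_le_prod (fun j _ => abs_nonneg _) fun j _ => hM j _)
    (sliceBallVol_mono hp hα₁ (sub_le_self _ (by positivity))) ENNReal.toReal_nonneg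
    (Finset.prod_nonneg fun j _ => (abs_nonneg _).trans (hM j 0))

section Vr

variable {p r : ℝ} {a c : ℕ} {α₁ : Fin a → ℝ} {α₂ : Fin c → ℝ}

theorem Vr_zero_mul_prod_le_Vr (hp : 0 < p) (hα₁ : ∀ i, 0 < α₁ i) (hα₂ : ∀ j, 0 < α₂ j)
    {ρ₂ : Fin c → ℝ → ℝ} (hm : ∀ j, Measurable (ρ₂ j)) (h0 : ∀ j x, 0 ≤ ρ₂ j x)
    {M : Fin c → ℝ} (hM : ∀ j x, ρ₂ j x ≤ M j) {h₂ w : Fin c → ℝ} (hw : ∀ j, 0 ≤ w j)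
    (htwo : ∀ j x, 2 * (ρ₂ j x * w j) ≤ ρ₂ j (x + h₂ j) + ρ₂ j (-x + h₂ j)) :
    Vr p r α₁ α₂ ρ₂ 0 * ∏ j, w j ≤ Vr p r α₁ α₂ ρ₂ h₂ := by
  set S := {u : Fin c → ℝ | ∑ j, |u j / α₂ j| ^ p < r ^ p}
  set W := fun u : Fin c → ℝ => sliceBallVol p α₁ (r ^ p - ∑ j, |u j / α₂ j| ^ p)
  have habs (j x) : |ρ₂ j x| ≤ M j := by rw [abs_of_nonneg (h0 j x)]; exact hM j x
  have integrable {g : Fin c → ℝ → ℝ} (hg : ∀ j, Measurable (g j)) {K : Fin c → ℝ}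
      (hK : ∀ j x, |g j x| ≤ K j) : IntegrableOn (fun u => (∏ j, g j (u j)) * W u) S :=
    integrableOn_prod_mul_sliceBallVol hp hα₁ hα₂ hg hK _
  have hshift (j) : Measurable fun x => ρ₂ j (x + h₂ j) := (hm j).comp (measurable_add_const _)
  have hsym : ∫ u in S, (∏ j, (ρ₂ j (u j + h₂ j) + ρ₂ j (-u j + h₂ j))) * W u =
      2 ^ c * Vr p r α₁ α₂ ρ₂ h₂ := by
    rw [integral_prod_add_comp_neg_mul (g := fun j x => ρ₂ j (x + h₂ j))
      (fun ε hε => measurePreserving_mul_left_restrict_setOf_sum_abs_div_rpow_lt hε α₂ _)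
      (fun ε hε u => by simp only [W, sum_abs_div_rpow_mul_of_abs_eq_one hε])
      (integrable hshift fun j x => habs j _), Fintype.card_fin]
    rfl
  have hpt (u : Fin c → ℝ) : 2 ^ c * ((∏ j, ρ₂ j (u j + 0)) * W u * ∏ j, w j) ≤
      (∏ j, (ρ₂ j (u j + h₂ j) + ρ₂ j (-u j + h₂ j))) * W u := by
    have hprod : 2 ^ c * ((∏ j, ρ₂ j (u j + 0)) * ∏ j, w j) = ∏ j, 2 * (ρ₂ j (u j) * w j) := by
      simp [Finset.prod_mul_distrib]
    calc 2 ^ c * ((∏ j, ρ₂ j (u j + 0)) * W u * ∏ j, w j)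
        = (∏ j, 2 * (ρ₂ j (u j) * w j)) * W u := by rw [← hprod]; ring
      _ ≤ _ := mul_le_mul_of_nonneg_right (Finset.prod_le_prod
          (fun j _ => mul_nonneg zero_le_two (mul_nonneg (h0 j _) (hw j)))
          fun j _ => htwo j (u j)) ENNReal.toReal_nonneg
  refine le_of_mul_le_mul_left ?_ (by positivity : (0 : ℝ) < 2 ^ c)
  rw [← hsym, Vr, ← integral_mul_const, ← integral_const_mul]
  refine integral_mono (((integrable (fun j => (hm j).comp (measurable_add_const 0))
    fun j x => habs j _).mul_const _).const_mul _)
    (integrable (fun j => (hshift j).add ((hshift j).comp measurable_neg))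
      fun j x => (abs_add_le _ _).trans (add_le_add (habs j _) (habs j _))) hpt

end Vr

theorem stmt17_general (p r : ℝ) (hp : 1 ≤ p) (hp2 : p ≤ 2)
    (a c : ℕ)
    (α₁ : Fin a → ℝ) (α₂ : Fin c → ℝ) (hα₁ : ∀ i, 0 < α₁ i) (hα₂ : ∀ j, 0 < α₂ j)
    (γ : Fin c → ℝ) (hγ : ∀ j, 0 < γ j)
    (ρ : ℝ → ℝ) (Z : ℝ) (hZ : 0 < Z)
    (hρ : ∀ u, ρ u = Z * Real.exp (-|u| ^ p))
    (h₂ : Fin c → ℝ) :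
    Vr p r α₁ α₂ (fun j x => (γ j)⁻¹ * ρ ((γ j)⁻¹ * x)) 0 *
        ∏ j, Real.exp (-|h₂ j / γ j| ^ p) ≤
      Vr p r α₁ α₂ (fun j x => (γ j)⁻¹ * ρ ((γ j)⁻¹ * x)) h₂ := by
  obtain rfl : ρ = fun u => Z * exp (-|u| ^ p) := funext hρ
  have hC (j) : 0 ≤ (γ j)⁻¹ * Z := by have := hγ j; positivity
  refine Vr_zero_mul_prod_le_Vr (by linarith) hα₁ hα₂ (M := fun j => (γ j)⁻¹ * Z)
    (fun j => by fun_prop) (fun j x => by have := hγ j; positivity)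
    (fun j x => ?_) (fun j => (exp_pos _).le) (fun j x => ?_)
  · rw [← mul_assoc]
    exact mul_le_of_le_one_right (hC j) (exp_le_one_iff.2 (neg_nonpos.2 (by positivity)))
  · simpa only [mul_assoc] using
      two_mul_mul_exp_neg_abs_inv_mul_rpow_le (by linarith) hp2 (hC j) x (h₂ j)

/-- For the Besov-type density `ρ(u) ∝ exp(-|u|^p)`, `1 ≤ p ≤ 2`, and shifts with
`|h_k/γ_k| ≤ 1`, `V_r(h,a,b) ≥ V_r(0,a,b) ⋅ ∏_k exp(-|h_k/γ_k|^p)`. -/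
theorem stmt17 (p r : ℝ) (hp : 1 ≤ p) (hp2 : p ≤ 2) (hr : 0 < r)
    (a c : ℕ) (hc : 0 < c)
    (α₁ : Fin a → ℝ) (α₂ : Fin c → ℝ) (hα₁ : ∀ i, 0 < α₁ i) (hα₂ : ∀ j, 0 < α₂ j)
    (γ : Fin c → ℝ) (hγ : ∀ j, 0 < γ j)
    (ρ : ℝ → ℝ) (Z : ℝ) (hZ : 0 < Z)
    (hρ : ∀ u, ρ u = Z * Real.exp (-|u| ^ p))
    (h₂ : Fin c → ℝ) (hh : ∀ j, |h₂ j / γ j| ≤ 1) :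
    Vr p r α₁ α₂ (fun j x => (γ j)⁻¹ * ρ ((γ j)⁻¹ * x)) 0 *
        ∏ j, Real.exp (-|h₂ j / γ j| ^ p) ≤
      Vr p r α₁ α₂ (fun j x => (γ j)⁻¹ * ρ ((γ j)⁻¹ * x)) h₂ :=
  stmt17_general p r hp hp2 a c α₁ α₂ hα₁ hα₂ γ hγ ρ Z hZ hρ h₂
end
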